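/- Let u₀ with D^m u₀ ∈ H¹_α(ℝ³) for some m ∈ ℕ ∪ {0}, div u₀ = 0, and decay character r*(u₀) = r* ∈ (−3/2, ∞). Let ū solve ∂_t(ū − αΔū) − μΔū = 0 with ū(0) = u₀. Then there exist constants C̃₂, C̃₃ > 0 such that ‖D^m ū(t)‖²_{H¹_α(ℝ³)} ≤ C̃₂(t + C̃₃)^{−(3/2 + r* + m)} for all t ≥ 0. -/

import Mathlib

/- STATEMENT 19: Decay of derivatives of the linear solution. If D^m u₀ ∈ H¹_α(ℝ³),
   div u₀ = 0, and the decay character r*(u₀) = r ∈ (−3/2,∞) exists (indicator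
   limit P with 0 < P < ∞), then there are C̃₂, C̃₃ > 0 with
   ‖D^m ū(t)‖²_{H¹_α} ≤ C̃₂(t + C̃₃)^{−(3/2 + r + m)} for all t ≥ 0. On the Fourier
   side (Plancherel, constants absorbed)
   ‖D^m ū(t)‖²_{H¹_α} = ∫ |ξ|^{2m}(1+α|ξ|²)|e^{-μ|ξ|²t/(1+α|ξ|²)} û₀(ξ)|² dξ. -/

noncomputable section
open MeasureTheory Filter

abbrev E3 := EuclideanSpace ℝ (Fin 3)
abbrev F3 := EuclideanSpace ℂ (Fin 3)

/-
The multiplier `exp (-μ |ξ|² t / (1 + α |ξ|²))` is at most `exp (-c t min (|ξ|², 1))` with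
`c = μ / (1 + α)`. Outside the unit ball this yields the factor `exp (-2 c t)` in front of the
finite `H¹_α` norm of `D^m u₀`. Inside it, the decay character gives
`∫_{|ξ| ≤ s} |û₀|² ≤ A s^(2r+3)` for `s ≤ 1`; writing `|ξ|^(2m) exp (-b |ξ|²)` as an integral over
the radius and exchanging the order of integration (a layer-cake argument) bounds the low
frequencies by a Gamma integral of order `b^(-(3/2 + r + m))`, `b = 2 c t`. For `t ≤ 1` the
`H¹_α` norm itself is the bound.
-/

open Real Set Metric Topology

lemma exp_neg_le_rpow_self_mul_rpow_neg {b K : ℝ} (hb : 0 < b) (hK : 0 < K) :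
    exp (-b) ≤ K ^ K * b ^ (-K) := by
  have hlin : b / K ≤ exp (b / K) := by linarith [add_one_le_exp (b / K)]
  have hpow : (b / K) ^ K ≤ exp b := by
    calc (b / K) ^ K ≤ exp (b / K) ^ K := by gcongr
      _ = exp b := by rw [← exp_mul, div_mul_cancel₀ _ hK.ne']
  rw [div_rpow hb.le hK.le, div_le_iff₀ (by positivity)] at hpow
  rw [exp_neg, rpow_neg hb.le, ← div_eq_mul_inv, le_div_iff₀ (by positivity), mul_comm]
  calc b ^ K * (exp b)⁻¹ ≤ exp b * K ^ K * (exp b)⁻¹ := by gcongr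
    _ = K ^ K := by field_simp

lemma rpow_neg_le_two_rpow_mul_add_one_rpow_neg {t K : ℝ} (ht : 1 ≤ t) (hK : 0 ≤ K) :
    t ^ (-K) ≤ 2 ^ K * (t + 1) ^ (-K) := by
  have h : (2 * t) ^ (-K) ≤ (t + 1) ^ (-K) :=
    rpow_le_rpow_of_nonpos (by linarith) (by linarith) (by linarith)
  rw [mul_rpow zero_le_two (by linarith), rpow_neg zero_le_two] at h
  calc t ^ (-K) = 2 ^ K * ((2 ^ K)⁻¹ * t ^ (-K)) := by
        rw [← mul_assoc, mul_inv_cancel₀ (by positivity), one_mul]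
    _ ≤ 2 ^ K * (t + 1) ^ (-K) := by gcongr

lemma one_le_two_rpow_mul_add_one_rpow_neg {t K : ℝ} (ht₀ : 0 ≤ t) (ht₁ : t ≤ 1) (hK : 0 ≤ K) :
    1 ≤ 2 ^ K * (t + 1) ^ (-K) := by
  have h : (2 : ℝ) ^ (-K) ≤ (t + 1) ^ (-K) :=
    rpow_le_rpow_of_nonpos (by linarith) (by linarith) (by linarith)
  calc (1 : ℝ) = 2 ^ K * 2 ^ (-K) := by rw [← rpow_add two_pos, add_neg_cancel, rpow_zero]
    _ ≤ 2 ^ K * (t + 1) ^ (-K) := by gcongr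

lemma exists_le_mul_add_one_rpow_neg {f : ℝ → ℝ} {M D K : ℝ} (hK : 0 ≤ K)
    (hM : ∀ t, 0 ≤ t → f t ≤ M) (hD : ∀ t, 1 ≤ t → f t ≤ D * t ^ (-K)) :
    ∃ C, 0 < C ∧ ∀ t, 0 ≤ t → f t ≤ C * (t + 1) ^ (-K) := by
  refine ⟨(max M 0 + max D 0 + 1) * 2 ^ K, by positivity, fun t ht => ?_⟩
  have hβ : 0 ≤ 2 ^ K * (t + 1) ^ (-K) := by positivity
  rw [mul_assoc]
  rcases le_total t 1 with ht₁ | ht₁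
  · have h1 := one_le_two_rpow_mul_add_one_rpow_neg ht ht₁ hK
    nlinarith [hM t ht, le_max_left M 0, le_max_right M 0, le_max_right D 0]
  · have h1 := rpow_neg_le_two_rpow_mul_add_one_rpow_neg ht₁ hK
    have h2 : f t ≤ max D 0 * t ^ (-K) := (hD t ht₁).trans (by gcongr; exact le_max_left D 0)
    nlinarith [le_max_right M 0, le_max_right D 0, rpow_nonneg (by linarith : (0 : ℝ) ≤ t) (-K)]

lemma min_div_one_add_le_div_one_add_mul {α x : ℝ} (hα : 0 ≤ α) (hx : 0 ≤ x) :
    min x 1 / (1 + α) ≤ x / (1 + α * x) := by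
  rw [div_le_div_iff₀ (by positivity) (by positivity)]
  rcases le_total x 1 with hx₁ | hx₁
  · rw [min_eq_left hx₁]
    nlinarith [mul_nonneg hα hx]
  · rw [min_eq_right hx₁]
    nlinarith

lemma exp_neg_div_one_add_mul_le {α ν t x : ℝ} (hα : 0 ≤ α) (hν : 0 ≤ ν) (ht : 0 ≤ t)
    (hx : 0 ≤ x) :
    exp (-(ν * x) * t / (1 + α * x)) ≤ exp (-(ν / (1 + α) * t) * min x 1) := by
  have h := mul_le_mul_of_nonneg_left (min_div_one_add_le_div_one_add_mul hα hx)
    (mul_nonneg hν ht)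
  rw [exp_le_exp]
  have h1 : -(ν * x) * t / (1 + α * x) = -(ν * t * (x / (1 + α * x))) := by ring
  have h2 : -(ν / (1 + α) * t) * min x 1 = -(ν * t * (min x 1 / (1 + α))) := by ring
  rw [h1, h2]
  linarith

lemma exp_neg_div_one_add_mul_le_one {α ν t x : ℝ} (hα : 0 ≤ α) (hν : 0 ≤ ν) (ht : 0 ≤ t)
    (hx : 0 ≤ x) : exp (-(ν * x) * t / (1 + α * x)) ≤ 1 := by
  rw [exp_le_one_iff, neg_mul, neg_div]
  have : 0 ≤ ν * x * t / (1 + α * x) := by positivity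
  linarith

lemma pow_mul_exp_neg_mul_sq_le (b : ℝ) (n : ℕ) {x : ℝ} (hx₀ : 0 ≤ x) (hx₁ : x ≤ 1) :
    x ^ n * exp (-b * x ^ 2) ≤
      exp (-b) + ∫ s in Ioc x 1, 2 * b * s ^ (n + 1) * exp (-b * s ^ 2) := by
  set g' : ℝ → ℝ := fun s => n * s ^ (n - 1) * exp (-b * s ^ 2)
    - 2 * b * s ^ (n + 1) * exp (-b * s ^ 2)
  have hderiv : ∀ s, HasDerivAt (fun s => s ^ n * exp (-b * s ^ 2)) (g' s) s := fun s => by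
    refine ((hasDerivAt_pow n s).mul (((hasDerivAt_pow 2 s).const_mul (-b)).exp)).congr_deriv ?_
    simp only [g']
    rcases n with _ | n
    · simp only [CharP.cast_eq_zero, zero_mul, pow_zero, one_mul, zero_add, pow_one, Nat.cast_ofNat]
      ring
    · simp only [Nat.add_sub_cancel, pow_succ]
      push_cast
      ring
  have hftc : ∫ s in x..1, g' s = exp (-b) - x ^ n * exp (-b * x ^ 2) := by
    rw [intervalIntegral.integral_eq_sub_of_hasDerivAt (fun s _ => hderiv s)
      ((by fun_prop : Continuous g').intervalIntegrable _ _)]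
    simp
  have hmono : ∫ s in x..1, -g' s ≤ ∫ s in x..1, 2 * b * s ^ (n + 1) * exp (-b * s ^ 2) :=
    intervalIntegral.integral_mono_on hx₁
      ((by fun_prop : Continuous fun s => -g' s).intervalIntegrable _ _)
      ((by fun_prop : Continuous fun s : ℝ => 2 * b * s ^ (n + 1) * exp (-b * s ^ 2)).intervalIntegrable
        _ _)
      fun s hs => by
        have : 0 ≤ n * s ^ (n - 1) * exp (-b * s ^ 2) := by
          have := hx₀.trans hs.1
          positivity
        simp only [g']
        linarith
  rw [intervalIntegral.integral_neg, hftc, intervalIntegral.integral_of_le hx₁] at hmono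
  linarith

lemma pow_succ_mul_exp_mul_rpow_eq {b κ s : ℝ} (n : ℕ) (hs : 0 < s) :
    2 * b * s ^ (n + 1) * exp (-b * s ^ 2) * s ^ κ =
      2 * b * (s ^ ((n : ℝ) + 1 + κ) * exp (-b * s ^ 2)) := by
  rw [rpow_add hs, ← Nat.cast_add_one, rpow_natCast]
  ring

lemma integrableOn_Ioc_pow_mul_exp_mul_rpow {b κ : ℝ} (hb : 0 < b) (hκ : -2 < κ) (n : ℕ) :
    IntegrableOn (fun s => 2 * b * s ^ (n + 1) * exp (-b * s ^ 2) * s ^ κ) (Ioc 0 1) := by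
  have h : IntegrableOn (fun s => 2 * b * (s ^ ((n : ℝ) + 1 + κ) * exp (-b * s ^ 2))) (Ioc 0 1) :=
    IntegrableOn.mono_set (Integrable.const_mul (integrableOn_rpow_mul_exp_neg_mul_sq hb
      (by have := n.cast_nonneg (α := ℝ); linarith : -1 < (n : ℝ) + 1 + κ)) (2 * b))
      Ioc_subset_Ioi_self
  refine h.congr_fun (fun s hs => ?_) measurableSet_Ioc
  exact (pow_succ_mul_exp_mul_rpow_eq n hs.1).symm

lemma setIntegral_Ioc_pow_mul_exp_mul_rpow_le {b κ : ℝ} (hb : 0 < b) (hκ : -2 < κ) (n : ℕ) :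
    ∫ s in Ioc 0 1, 2 * b * s ^ (n + 1) * exp (-b * s ^ 2) * s ^ κ ≤
      Gamma ((n + κ) / 2 + 1) * b ^ (-((n + κ) / 2)) := by
  have hq : -1 < (n : ℝ) + 1 + κ := by have := n.cast_nonneg (α := ℝ); linarith
  have hint := integrableOn_rpow_mul_exp_neg_mul_sq hb hq
  calc ∫ s in Ioc 0 1, 2 * b * s ^ (n + 1) * exp (-b * s ^ 2) * s ^ κ
      = 2 * b * ∫ s in Ioc 0 1, s ^ ((n : ℝ) + 1 + κ) * exp (-b * s ^ 2) := by
        rw [← integral_const_mul]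
        exact setIntegral_congr_fun measurableSet_Ioc fun s hs =>
          pow_succ_mul_exp_mul_rpow_eq n hs.1
    _ ≤ 2 * b * ∫ s in Ioi 0, s ^ ((n : ℝ) + 1 + κ) * exp (-b * s ^ 2) := by
        refine mul_le_mul_of_nonneg_left
          (setIntegral_mono_set hint ?_ Ioc_subset_Ioi_self.eventuallyLE) (by positivity)
        filter_upwards [ae_restrict_mem measurableSet_Ioi] with s hs
        have : 0 < s := hs
        positivity
    _ = Gamma ((n + κ) / 2 + 1) * b ^ (-((n + κ) / 2)) := by
        simp_rw [← rpow_two]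
        rw [integral_rpow_mul_exp_neg_mul_rpow two_pos hq hb]
        rw [show ((n : ℝ) + 1 + κ + 1) / 2 = (n + κ) / 2 + 1 by ring,
          show -((n : ℝ) + 1 + κ + 1) / 2 = -((n + κ) / 2) - 1 by ring, rpow_sub_one hb.ne']
        field_simp

section

variable {E : Type*} [NormedAddCommGroup E] {q : E → ℝ} {φ : ℝ → ℝ}

lemma setIntegral_Ioc_indicator_norm_lt (ξ : E) :
    ∫ s in Ioc 0 1, {p : E × ℝ | ‖p.1‖ < p.2}.indicator (fun p => q p.1 * φ p.2) (ξ, s) =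
      q ξ * ∫ s in Ioc ‖ξ‖ 1, φ s := by
  have hsec : ∀ s, {p : E × ℝ | ‖p.1‖ < p.2}.indicator (fun p => q p.1 * φ p.2) (ξ, s) =
      (Ioi ‖ξ‖).indicator (fun s => q ξ * φ s) s := fun s => by
    simp [indicator_apply]
  simp_rw [hsec]
  rw [setIntegral_indicator measurableSet_Ioi, integral_const_mul, Ioc_inter_Ioi,
    max_eq_right (norm_nonneg ξ)]

variable [MeasurableSpace E] {μ : Measure E} {κ P : ℝ}

lemma eventually_integrableOn_closedBall_of_tendsto (hP : P ≠ 0)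
    (h : Tendsto (fun ρ => ρ ^ (-κ) * ∫ ξ in closedBall 0 ρ, q ξ ∂μ) (𝓝[>] 0) (𝓝 P)) :
    ∀ᶠ ρ in 𝓝[>] 0, IntegrableOn q (closedBall 0 ρ) μ := by
  filter_upwards [h.eventually_ne hP] with ρ hρ
  -- a non-integrable `q` has Bochner integral `0`, which `P ≠ 0` excludes
  by_contra hq
  rw [integral_undef hq, mul_zero] at hρ
  exact hρ rfl

lemma eventually_integral_closedBall_le_rpow
    (h : Tendsto (fun ρ => ρ ^ (-κ) * ∫ ξ in closedBall 0 ρ, q ξ ∂μ) (𝓝[>] 0) (𝓝 P)) :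
    ∀ᶠ ρ in 𝓝[>] 0, ∫ ξ in closedBall 0 ρ, q ξ ∂μ ≤ (P + 1) * ρ ^ κ := by
  filter_upwards [h.eventually_lt_const (lt_add_one P), self_mem_nhdsWithin] with ρ hρ hρ₀
  have hρκ : 0 < ρ ^ κ := rpow_pos_of_pos hρ₀ κ
  rw [rpow_neg hρ₀.le, inv_mul_lt_iff₀ hρκ] at hρ
  linarith

variable [BorelSpace E]

lemma exists_integral_closedBall_le_rpow {C : ℝ} (hκ : 0 ≤ κ) (hq₀ : ∀ ξ, 0 ≤ q ξ)
    (hq : IntegrableOn q (closedBall 0 1) μ)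
    (h : ∀ᶠ ρ in 𝓝[>] 0, ∫ ξ in closedBall 0 ρ, q ξ ∂μ ≤ C * ρ ^ κ) :
    ∃ A, ∀ s ∈ Ioc (0 : ℝ) 1, ∫ ξ in closedBall 0 s, q ξ ∂μ ≤ A * s ^ κ := by
  obtain ⟨u, hu, hsub⟩ := mem_nhdsGT_iff_exists_Ioc_subset.1 h
  set I := ∫ ξ in closedBall 0 1, q ξ ∂μ
  have hI : 0 ≤ I := setIntegral_nonneg measurableSet_closedBall fun ξ _ => hq₀ ξ
  refine ⟨max C (I * u ^ (-κ)), fun s hs => ?_⟩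
  rcases le_total s u with hsu | hus
  · have hCs : ∫ ξ in closedBall 0 s, q ξ ∂μ ≤ C * s ^ κ := hsub ⟨hs.1, hsu⟩
    exact hCs.trans (mul_le_mul_of_nonneg_right (le_max_left _ _) (rpow_nonneg hs.1.le κ))
  · calc ∫ ξ in closedBall 0 s, q ξ ∂μ ≤ I :=
          setIntegral_mono_set hq (Eventually.of_forall hq₀)
            (closedBall_subset_closedBall hs.2).eventuallyLE
      _ = I * u ^ (-κ) * u ^ κ := by
          rw [mul_assoc, ← rpow_add hu, neg_add_cancel, rpow_zero, mul_one]
      _ ≤ max C (I * u ^ (-κ)) * s ^ κ :=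
          mul_le_mul (le_max_right _ _) (rpow_le_rpow hu.le hus hκ) (rpow_nonneg hu.le κ)
            (le_max_of_le_right (mul_nonneg hI (rpow_nonneg hu.le _)))

lemma integrable_of_integrableOn_closedBall_of_norm_pow_mul {ρ : ℝ} (hρ : 0 < ρ) (n : ℕ)
    (hball : IntegrableOn q (closedBall 0 ρ) μ) (hn : Integrable (fun ξ => ‖ξ‖ ^ n * q ξ) μ) :
    Integrable q μ := by
  rw [← integrableOn_univ, ← union_compl_self (closedBall 0 ρ), integrableOn_union]
  refine ⟨hball, ?_⟩
  have hfar : IntegrableOn (fun ξ => (‖ξ‖ ^ n)⁻¹ * (‖ξ‖ ^ n * q ξ)) (closedBall 0 ρ)ᶜ μ := by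
    refine Integrable.bdd_mul (c := (ρ ^ n)⁻¹) hn.integrableOn (by fun_prop) ?_
    filter_upwards [ae_restrict_mem measurableSet_closedBall.compl] with ξ hξ
    have hρξ : ρ < ‖ξ‖ := by simpa using hξ
    rw [norm_inv, norm_pow, norm_norm]
    gcongr
  refine hfar.congr_fun (fun ξ hξ => ?_) measurableSet_closedBall.compl
  have hρξ : ρ < ‖ξ‖ := by simpa using hξ
  exact inv_mul_cancel_left₀ (pow_ne_zero n (hρ.trans hρξ).ne') (q ξ)

lemma nonneg_of_forall_integral_closedBall_le {A : ℝ} (hq₀ : ∀ ξ, 0 ≤ q ξ)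
    (hA : ∀ s ∈ Ioc (0 : ℝ) 1, ∫ ξ in closedBall 0 s, q ξ ∂μ ≤ A * s ^ κ) : 0 ≤ A := by
  simpa using (setIntegral_nonneg measurableSet_closedBall fun ξ _ => hq₀ ξ).trans
    (hA 1 ⟨one_pos, le_rfl⟩)

lemma integrable_indicator_norm_lt_prod (hq : IntegrableOn q (closedBall 0 1) μ)
    (hφ : IntegrableOn φ (Ioc 0 1)) :
    Integrable ({p : E × ℝ | ‖p.1‖ < p.2}.indicator fun p => q p.1 * φ p.2)
      ((μ.restrict (closedBall 0 1)).prod (volume.restrict (Ioc 0 1))) :=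
  (hq.mul_prod hφ).indicator (measurableSet_lt measurable_fst.norm measurable_snd)

lemma integrableOn_mul_setIntegral_Ioc [SFinite μ] (hq : IntegrableOn q (closedBall 0 1) μ)
    (hφ : IntegrableOn φ (Ioc 0 1)) :
    IntegrableOn (fun ξ => q ξ * ∫ s in Ioc ‖ξ‖ 1, φ s) (closedBall 0 1) μ := by
  have := (integrable_indicator_norm_lt_prod hq hφ).integral_prod_left
  simp only [setIntegral_Ioc_indicator_norm_lt] at this
  exact this

lemma setIntegral_mul_setIntegral_Ioc_le [SFinite μ] {G : ℝ → ℝ} (hq₀ : ∀ ξ, 0 ≤ q ξ)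
    (hq : IntegrableOn q (closedBall 0 1) μ) (hφ : IntegrableOn φ (Ioc 0 1))
    (hφ₀ : ∀ s ∈ Ioc (0 : ℝ) 1, 0 ≤ φ s) (hφG : IntegrableOn (fun s => φ s * G s) (Ioc 0 1))
    (hG : ∀ s ∈ Ioc (0 : ℝ) 1, ∫ ξ in closedBall 0 s, q ξ ∂μ ≤ G s) :
    ∫ ξ in closedBall 0 1, q ξ * (∫ s in Ioc ‖ξ‖ 1, φ s) ∂μ ≤ ∫ s in Ioc 0 1, φ s * G s := by
  have hF := integrable_indicator_norm_lt_prod hq hφ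
  simp_rw [← setIntegral_Ioc_indicator_norm_lt (q := q) (φ := φ)]
  rw [integral_integral_swap (f := fun ξ s =>
    {p : E × ℝ | ‖p.1‖ < p.2}.indicator (fun p => q p.1 * φ p.2) (ξ, s)) hF]
  refine setIntegral_mono_on hF.integral_prod_right hφG measurableSet_Ioc fun s hs => ?_
  have hsec : ∀ ξ, {p : E × ℝ | ‖p.1‖ < p.2}.indicator (fun p => q p.1 * φ p.2) (ξ, s) =
      {ξ : E | ‖ξ‖ < s}.indicator (fun ξ => φ s * q ξ) ξ := fun ξ => by
    simp [indicator_apply, mul_comm]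
  simp_rw [hsec]
  rw [setIntegral_indicator (measurableSet_lt measurable_norm measurable_const),
    integral_const_mul]
  refine mul_le_mul_of_nonneg_left (le_trans (setIntegral_mono_set ?_ ?_ ?_) (hG s hs)) (hφ₀ s hs)
  · exact hq.mono_set (closedBall_subset_closedBall hs.2)
  · exact Eventually.of_forall hq₀
  · refine Eventually.of_forall fun ξ hξ => ?_
    exact mem_closedBall_zero_iff.2 (le_of_lt hξ.2)

lemma integrableOn_closedBall_norm_pow_mul_exp_mul {b : ℝ} (hb : 0 ≤ b) (n : ℕ)
    (hq : IntegrableOn q (closedBall 0 1) μ) :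
    IntegrableOn (fun ξ => ‖ξ‖ ^ n * exp (-b * ‖ξ‖ ^ 2) * q ξ) (closedBall 0 1) μ := by
  refine Integrable.bdd_mul (c := 1) hq (by fun_prop) ?_
  filter_upwards [ae_restrict_mem measurableSet_closedBall] with ξ hξ
  rw [norm_mul, norm_pow, norm_norm, norm_of_nonneg (exp_pos _).le]
  exact mul_le_one₀ (pow_le_one₀ (norm_nonneg ξ) (mem_closedBall_zero_iff.1 hξ)) (exp_pos _).le
    (exp_le_one_iff.2 (by nlinarith [sq_nonneg ‖ξ‖]))

lemma setIntegral_closedBall_pow_mul_exp_le [SFinite μ] {b A : ℝ} (hb : 0 < b) (hκ : -2 < κ)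
    (n : ℕ) (hq₀ : ∀ ξ, 0 ≤ q ξ) (hq : IntegrableOn q (closedBall 0 1) μ)
    (hA : ∀ s ∈ Ioc (0 : ℝ) 1, ∫ ξ in closedBall 0 s, q ξ ∂μ ≤ A * s ^ κ) :
    ∫ ξ in closedBall 0 1, ‖ξ‖ ^ n * exp (-b * ‖ξ‖ ^ 2) * q ξ ∂μ ≤
      A * (exp (-b) + Gamma ((n + κ) / 2 + 1) * b ^ (-((n + κ) / 2))) := by
  set φ : ℝ → ℝ := fun s => 2 * b * s ^ (n + 1) * exp (-b * s ^ 2)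
  have hφ : IntegrableOn φ (Ioc 0 1) := (by fun_prop : Continuous φ).integrableOn_Ioc
  have hφ₀ : ∀ s ∈ Ioc (0 : ℝ) 1, 0 ≤ φ s := fun s hs => by have := hs.1; positivity
  have hmass : ∫ ξ in closedBall 0 1, q ξ ∂μ ≤ A := by simpa using hA 1 ⟨one_pos, le_rfl⟩
  have hA₀ := nonneg_of_forall_integral_closedBall_le hq₀ hA
  have hlhs := integrableOn_closedBall_norm_pow_mul_exp_mul hb.le n hq
  calc ∫ ξ in closedBall 0 1, ‖ξ‖ ^ n * exp (-b * ‖ξ‖ ^ 2) * q ξ ∂μ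
      ≤ ∫ ξ in closedBall 0 1, (exp (-b) * q ξ + q ξ * ∫ s in Ioc ‖ξ‖ 1, φ s) ∂μ := by
        refine setIntegral_mono_on hlhs ((hq.const_mul _).add
          (integrableOn_mul_setIntegral_Ioc hq hφ)) measurableSet_closedBall fun ξ hξ => ?_
        have := pow_mul_exp_neg_mul_sq_le b n (norm_nonneg ξ) (mem_closedBall_zero_iff.1 hξ)
        nlinarith [hq₀ ξ]
    _ = exp (-b) * ∫ ξ in closedBall 0 1, q ξ ∂μ +
          ∫ ξ in closedBall 0 1, q ξ * (∫ s in Ioc ‖ξ‖ 1, φ s) ∂μ := by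
        rw [integral_add (hq.const_mul _) (integrableOn_mul_setIntegral_Ioc hq hφ),
          integral_const_mul]
    _ ≤ exp (-b) * A + ∫ s in Ioc 0 1, φ s * (A * s ^ κ) := by
        gcongr
        refine setIntegral_mul_setIntegral_Ioc_le hq₀ hq hφ hφ₀ ?_ hA
        have := (integrableOn_Ioc_pow_mul_exp_mul_rpow hb hκ n).const_mul A
        simp only [φ, mul_left_comm _ A]
        exact this
    _ ≤ A * (exp (-b) + Gamma ((n + κ) / 2 + 1) * b ^ (-((n + κ) / 2))) := by
        have := setIntegral_Ioc_pow_mul_exp_mul_rpow_le hb hκ n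
        simp only [φ, mul_left_comm _ A, integral_const_mul]
        nlinarith

variable {α ν t : ℝ} {n : ℕ}

lemma integrable_exp_neg_div_mul (ht : 0 ≤ t) (hν : 0 ≤ ν) (hα : 0 ≤ α)
    (hw : Integrable (fun ξ => ‖ξ‖ ^ n * (1 + α * ‖ξ‖ ^ 2) * q ξ) μ) :
    Integrable (fun ξ => exp (-(ν * ‖ξ‖ ^ 2) * t / (1 + α * ‖ξ‖ ^ 2)) *
      (‖ξ‖ ^ n * (1 + α * ‖ξ‖ ^ 2) * q ξ)) μ := by
  refine hw.bdd_mul (c := 1) (by fun_prop : Measurable _).aestronglyMeasurable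
    (Eventually.of_forall fun ξ => ?_)
  rw [norm_of_nonneg (exp_pos _).le]
  exact exp_neg_div_one_add_mul_le_one hα hν ht (sq_nonneg _)

lemma integral_exp_neg_div_mul_le_add [SFinite μ] {A : ℝ} (hα : 0 ≤ α) (hν : 0 < ν)
    (ht : 0 < t) (hκ : -2 < κ) (hq₀ : ∀ ξ, 0 ≤ q ξ) (hq : IntegrableOn q (closedBall 0 1) μ)
    (hw : Integrable (fun ξ => ‖ξ‖ ^ n * (1 + α * ‖ξ‖ ^ 2) * q ξ) μ)
    (hA : ∀ s ∈ Ioc (0 : ℝ) 1, ∫ ξ in closedBall 0 s, q ξ ∂μ ≤ A * s ^ κ) :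
    ∫ ξ, exp (-(ν * ‖ξ‖ ^ 2) * t / (1 + α * ‖ξ‖ ^ 2)) * (‖ξ‖ ^ n * (1 + α * ‖ξ‖ ^ 2) * q ξ) ∂μ ≤
      (1 + α) * (A * (exp (-(ν / (1 + α) * t)) +
          Gamma ((n + κ) / 2 + 1) * (ν / (1 + α) * t) ^ (-((n + κ) / 2)))) +
        exp (-(ν / (1 + α) * t)) * ∫ ξ, ‖ξ‖ ^ n * (1 + α * ‖ξ‖ ^ 2) * q ξ ∂μ := by
  set c := ν / (1 + α)
  have hc : 0 < c * t := by positivity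
  have hmult : ∀ ξ : E, exp (-(ν * ‖ξ‖ ^ 2) * t / (1 + α * ‖ξ‖ ^ 2)) ≤
      exp (-(c * t) * min (‖ξ‖ ^ 2) 1) := fun ξ =>
    exp_neg_div_one_add_mul_le hα hν.le ht.le (sq_nonneg _)
  have hint := integrable_exp_neg_div_mul ht.le hν.le hα hw
  have hw₀ : ∀ ξ, 0 ≤ ‖ξ‖ ^ n * (1 + α * ‖ξ‖ ^ 2) * q ξ := fun ξ => by
    have := hq₀ ξ
    positivity
  rw [← integral_add_compl measurableSet_closedBall hint]
  gcongr ?_ + ?_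
  · calc _ ≤ ∫ ξ in closedBall 0 1, (1 + α) * (‖ξ‖ ^ n * exp (-(c * t) * ‖ξ‖ ^ 2) * q ξ) ∂μ := by
          refine setIntegral_mono_on hint.integrableOn ?_ measurableSet_closedBall fun ξ hξ => ?_
          · exact (integrableOn_closedBall_norm_pow_mul_exp_mul hc.le n hq).const_mul _
          · have hξ₁ : ‖ξ‖ ^ 2 ≤ 1 := pow_le_one₀ (norm_nonneg ξ) (mem_closedBall_zero_iff.1 hξ)
            have h := hmult ξ
            rw [min_eq_left hξ₁] at h
            have : 1 + α * ‖ξ‖ ^ 2 ≤ 1 + α := by nlinarith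
            calc _ ≤ exp (-(c * t) * ‖ξ‖ ^ 2) * (‖ξ‖ ^ n * (1 + α) * q ξ) := by
                  gcongr
                  exacts [hw₀ ξ, hq₀ ξ]
              _ = _ := by ring
      _ ≤ (1 + α) * (A * (exp (-(c * t)) +
          Gamma ((n + κ) / 2 + 1) * (c * t) ^ (-((n + κ) / 2)))) := by
          rw [integral_const_mul]
          gcongr
          exact setIntegral_closedBall_pow_mul_exp_le hc hκ n hq₀ hq hA
  · calc _ ≤ ∫ ξ in (closedBall 0 1)ᶜ, exp (-(c * t)) * (‖ξ‖ ^ n * (1 + α * ‖ξ‖ ^ 2) * q ξ) ∂μ := by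
          refine setIntegral_mono_on hint.integrableOn (hw.const_mul _).integrableOn
            measurableSet_closedBall.compl fun ξ hξ => ?_
          have hξ₁ : 1 ≤ ‖ξ‖ ^ 2 := one_le_pow₀ (by simpa using hξ : 1 < ‖ξ‖).le
          have h := hmult ξ
          rw [min_eq_right hξ₁, mul_one] at h
          exact mul_le_mul_of_nonneg_right h (hw₀ ξ)
      _ ≤ _ := by
          rw [integral_const_mul]
          exact mul_le_mul_of_nonneg_left
            (setIntegral_le_integral hw (Eventually.of_forall hw₀)) (exp_pos _).le

theorem exists_integral_exp_neg_div_mul_le_rpow [SFinite μ] {A : ℝ} (hα : 0 ≤ α) (hν : 0 < ν)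
    (hκ : 0 < κ) (hq₀ : ∀ ξ, 0 ≤ q ξ) (hq : IntegrableOn q (closedBall 0 1) μ)
    (hw : Integrable (fun ξ => ‖ξ‖ ^ n * (1 + α * ‖ξ‖ ^ 2) * q ξ) μ)
    (hA : ∀ s ∈ Ioc (0 : ℝ) 1, ∫ ξ in closedBall 0 s, q ξ ∂μ ≤ A * s ^ κ) :
    ∃ C, 0 < C ∧ ∀ t, 0 ≤ t →
      ∫ ξ, exp (-(ν * ‖ξ‖ ^ 2) * t / (1 + α * ‖ξ‖ ^ 2)) * (‖ξ‖ ^ n * (1 + α * ‖ξ‖ ^ 2) * q ξ) ∂μ ≤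
        C * (t + 1) ^ (-((n + κ) / 2)) := by
  set K := ((n : ℝ) + κ) / 2
  have hK : 0 < K := by positivity
  set W := ∫ ξ, ‖ξ‖ ^ n * (1 + α * ‖ξ‖ ^ 2) * q ξ ∂μ
  set c := ν / (1 + α)
  have hc : 0 < c := by positivity
  have hA₀ := nonneg_of_forall_integral_closedBall_le hq₀ hA
  have hW₀ : 0 ≤ W := integral_nonneg fun ξ => by have := hq₀ ξ; positivity
  refine exists_le_mul_add_one_rpow_neg (M := W)
    (D := ((1 + α) * A * (K ^ K + Gamma (K + 1)) + K ^ K * W) * c ^ (-K)) hK.le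
    (fun t ht => ?_) (fun t ht => ?_)
  · refine integral_mono (integrable_exp_neg_div_mul ht hν.le hα hw) hw fun ξ => ?_
    have := hq₀ ξ
    exact mul_le_of_le_one_left (by positivity)
      (exp_neg_div_one_add_mul_le_one hα hν.le ht (sq_nonneg _))
  · have hct : 0 < c * t := by positivity
    have hexp := exp_neg_le_rpow_self_mul_rpow_neg hct hK
    calc _ ≤ (1 + α) * (A * (exp (-(c * t)) + Gamma (K + 1) * (c * t) ^ (-K))) +
          exp (-(c * t)) * W :=
          integral_exp_neg_div_mul_le_add hα hν (by positivity) (by linarith) hq₀ hq hw hA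
      _ ≤ (1 + α) * (A * (K ^ K * (c * t) ^ (-K) + Gamma (K + 1) * (c * t) ^ (-K))) +
          K ^ K * (c * t) ^ (-K) * W := by gcongr
      _ = _ := by
          rw [mul_rpow hc.le (by positivity)]
          ring

end

theorem linear_derivative_decay_general (α μ : ℝ) (hα : 0 < α) (hμ : 0 < μ) (m : ℕ)
    (u0hat : E3 → F3)
    (hHm : MemLp (fun ξ : E3 => ‖ξ‖ ^ m * ‖u0hat ξ‖) 2 volume)
    (hHm1 : MemLp (fun ξ : E3 => ‖ξ‖ ^ (m + 1) * ‖u0hat ξ‖) 2 volume)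
    (r P : ℝ) (hr : -(3 / 2 : ℝ) < r) (hP : 0 < P)
    (hlim : Tendsto
      (fun ρ : ℝ => ρ ^ (-2 * r - 3) *
        ∫ ξ in Metric.closedBall (0 : E3) ρ, ‖u0hat ξ‖ ^ 2)
      (nhdsWithin 0 (Set.Ioi 0)) (nhds P)) :
    ∃ C₂ C₃ : ℝ, 0 < C₂ ∧ 0 < C₃ ∧ ∀ t : ℝ, 0 ≤ t →
      (∫ ξ : E3, ‖ξ‖ ^ (2 * m) * (1 + α * ‖ξ‖ ^ 2) *
          ‖Real.exp (-(μ * ‖ξ‖ ^ 2) * t / (1 + α * ‖ξ‖ ^ 2)) • u0hat ξ‖ ^ 2) ≤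
        C₂ * (t + C₃) ^ (-(3 / 2 + r + (m : ℝ))) := by
  set q : E3 → ℝ := fun ξ => ‖u0hat ξ‖ ^ 2
  have hq₀ : ∀ ξ, 0 ≤ q ξ := fun ξ => sq_nonneg _
  have hm : Integrable (fun ξ : E3 => ‖ξ‖ ^ (2 * m) * q ξ) :=
    hHm.integrable_sq.congr (Eventually.of_forall fun ξ => by simp only [q]; ring)
  have hm1 : Integrable (fun ξ : E3 => ‖ξ‖ ^ (2 * m) * (1 + α * ‖ξ‖ ^ 2) * q ξ) :=
    (hm.add (hHm1.integrable_sq.const_mul α)).congr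
      (Eventually.of_forall fun ξ => by simp only [q, Pi.add_apply]; ring)
  rw [show -2 * r - 3 = -(2 * r + 3) by ring] at hlim
  obtain ⟨ρ, hball, hρ⟩ := ((eventually_integrableOn_closedBall_of_tendsto hP.ne' hlim).and
    self_mem_nhdsWithin).exists
  have hq : IntegrableOn q (closedBall 0 1) :=
    (integrable_of_integrableOn_closedBall_of_norm_pow_mul hρ (2 * m) hball hm).integrableOn
  obtain ⟨A, hA⟩ := exists_integral_closedBall_le_rpow (by linarith) hq₀ hq
    (eventually_integral_closedBall_le_rpow hlim)
  obtain ⟨C, hC, hdecay⟩ := exists_integral_exp_neg_div_mul_le_rpow (ν := 2 * μ) hα.le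
    (by positivity) (by linarith : 0 < 2 * r + 3) hq₀ hq hm1 hA
  refine ⟨C, 1, hC, one_pos, fun t ht => ?_⟩
  convert hdecay t ht using 3
  · rw [norm_smul, norm_of_nonneg (exp_pos _).le, mul_pow, ← exp_nat_mul]
    simp only [q]
    ring_nf
  · push_cast
    ring

theorem linear_derivative_decay (α μ : ℝ) (hα : 0 < α) (hμ : 0 < μ) (m : ℕ)
    (u0hat : E3 → F3)
    (hHm : MemLp (fun ξ : E3 => ‖ξ‖ ^ m * ‖u0hat ξ‖) 2 volume)
    (hHm1 : MemLp (fun ξ : E3 => ‖ξ‖ ^ (m + 1) * ‖u0hat ξ‖) 2 volume)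
    (hdiv : ∀ ξ : E3, (∑ i : Fin 3, (ξ i : ℂ) * u0hat ξ i) = 0)
    (r P : ℝ) (hr : -(3 / 2 : ℝ) < r) (hP : 0 < P)
    (hlim : Tendsto
      (fun ρ : ℝ => ρ ^ (-2 * r - 3) *
        ∫ ξ in Metric.closedBall (0 : E3) ρ, ‖u0hat ξ‖ ^ 2)
      (nhdsWithin 0 (Set.Ioi 0)) (nhds P)) :
    ∃ C₂ C₃ : ℝ, 0 < C₂ ∧ 0 < C₃ ∧ ∀ t : ℝ, 0 ≤ t →
      (∫ ξ : E3, ‖ξ‖ ^ (2 * m) * (1 + α * ‖ξ‖ ^ 2) *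
          ‖Real.exp (-(μ * ‖ξ‖ ^ 2) * t / (1 + α * ‖ξ‖ ^ 2)) • u0hat ξ‖ ^ 2) ≤
        C₂ * (t + C₃) ^ (-(3 / 2 + r + (m : ℝ))) :=
  linear_derivative_decay_general α μ hα hμ m u0hat hHm hHm1 r P hr hP hlim
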